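/- The variance Var(T) = α^{1/T}(1−α)^{1/T} / (α^{1/T} + (1−α)^{1/T})² of the temperature-scaled Bernoulli decision is monotonically non-decreasing in T on (0, ∞); specifically its derivative with respect to T is nonnegative for all T > 0 and all α ∈ (0,1). -/

import Mathlib

open Real

/-! In the inverse temperature `x = 1/T` the variance is `a^x b^x / (a^x + b^x)^2` with `a = α`,
`b = 1 - α`. Its `x`-derivative carries the factor `-(log a - log b)(a^x - b^x)`, which is `≤ 0`
for `x ≥ 0` since `log` and `t ↦ t^x` are both monotone; as `x` decreases in `T`, the variance
increases in `T`. -/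

lemma log_sub_log_mul_rpow_sub_rpow_nonneg {a b x : ℝ} (ha : 0 < a) (hb : 0 < b) (hx : 0 ≤ x) :
    0 ≤ (log a - log b) * (a ^ x - b ^ x) :=
  (strictMonoOn_log.monotoneOn.monovaryOn
    ((monotoneOn_rpow_Ici_of_exponent_nonneg hx).mono Set.Ioi_subset_Ici_self)).sub_mul_sub_nonneg
    hb ha

lemma hasDerivAt_rpow_mul_rpow_div_rpow_add_rpow_sq {a b : ℝ} (ha : 0 < a) (hb : 0 < b) (x : ℝ) :
    HasDerivAt (fun x : ℝ => a ^ x * b ^ x / (a ^ x + b ^ x) ^ 2)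
      (-(a ^ x * b ^ x * ((log a - log b) * (a ^ x - b ^ x)) / (a ^ x + b ^ x) ^ 3)) x := by
  have hA := (hasStrictDerivAt_const_rpow ha x).hasDerivAt
  have hB := (hasStrictDerivAt_const_rpow hb x).hasDerivAt
  have hsum : a ^ x + b ^ x ≠ 0 := by positivity
  refine ((hA.fun_mul hB).fun_div ((hA.fun_add hB).fun_pow 2) (pow_ne_zero 2 hsum)).congr_deriv ?_
  field_simp
  ring

/-- The derivative of the temperature-scaled Bernoulli variance
Var(T) = α^{1/T}(1−α)^{1/T}/(α^{1/T}+(1−α)^{1/T})² is nonnegative for all T > 0, α ∈ (0,1). -/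
theorem variance_deriv_nonneg (α : ℝ) (hα₀ : 0 < α) (hα₁ : α < 1) (T : ℝ) (hT : 0 < T) :
    0 ≤ deriv (fun T : ℝ =>
      α ^ (1 / T) * (1 - α) ^ (1 / T) / (α ^ (1 / T) + (1 - α) ^ (1 / T)) ^ 2) T := by
  have h1α : 0 < 1 - α := by linarith
  have hinv : HasDerivAt (fun T : ℝ => 1 / T) (-(T ^ 2)⁻¹) T := by
    simpa only [one_div] using hasDerivAt_inv hT.ne'
  have hVar : HasDerivAt (fun T : ℝ =>
      α ^ (1 / T) * (1 - α) ^ (1 / T) / (α ^ (1 / T) + (1 - α) ^ (1 / T)) ^ 2) _ T :=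
    (hasDerivAt_rpow_mul_rpow_div_rpow_add_rpow_sq hα₀ h1α (1 / T)).comp T hinv
  have hmono := log_sub_log_mul_rpow_sub_rpow_nonneg hα₀ h1α (one_div_pos.2 hT).le
  rw [hVar.deriv]
  exact mul_nonneg_of_nonpos_of_nonpos (neg_nonpos.2 (by positivity)) (neg_nonpos.2 (by positivity))
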